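/- Let 𝕌 be a subfield of ℝ, n ≥ 2, and let P = (p_ij) be an n×n positive stochastic matrix with entries in 𝕌. If min_{i,j} p_ij > 1/n − 1/n², then P is similar over 𝕌 to a positive doubly stochastic matrix Q and is strong shift equivalent over 𝕌₊ to Q through a chain consisting entirely of n×n matrices. -/

import Mathlib

/-!
Let `π` be the stationary distribution of `P`. It has entries in `𝕌`: `P - 1` is singular over `𝕌`,
and a nonzero left fixed vector of a positive stochastic matrix has entries of one strict sign, so
a left null vector over `𝕌` normalizes to `π`. Write `𝟙 xᵀ` for `replicateRow ι x` and put
`x = π - 𝟙 / n`. Since `∑ x = 0`, the matrix `1 + 𝟙 xᵀ` has inverse `1 - 𝟙 xᵀ`, and it conjugates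
`P` into the doubly stochastic `Q = P + 𝟙 (x P - x)ᵀ` (`rankOneConj P x`).

Split `x = a - b` into positive and negative parts, so `s = ∑ a = ∑ b`. If `s < 1`, then
`P = (P - 𝟙 aᵀ) (1 + 𝟙 aᵀ / (1 - s))`, `(Q - 𝟙 bᵀ) (1 + 𝟙 bᵀ / (1 - s)) = Q` and
`(1 + 𝟙 aᵀ / (1 - s)) (P - 𝟙 aᵀ) = (1 + 𝟙 bᵀ / (1 - s)) (Q - 𝟙 bᵀ)`, a strong shift equivalence
in two steps. The bound `p_ij > L = 1/n - 1/n²` puts all entries of `P` and `π` in `[L, L + 1/n]`,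
which is what makes `P - 𝟙 aᵀ` and `Q - 𝟙 bᵀ` nonnegative.
-/

open Matrix BigOperators

/-- Elementary strong shift equivalence between `n × n` real matrices, with all entries of the
connecting matrices lying in the set `S ⊆ ℝ`. -/
def ESSEn (S : Set ℝ) {n : ℕ} (A B : Matrix (Fin n) (Fin n) ℝ) : Prop :=
  ∃ U V : Matrix (Fin n) (Fin n) ℝ,
    (∀ i j, U i j ∈ S) ∧ (∀ i j, V i j ∈ S) ∧ A = U * V ∧ B = V * U

/-- Strong shift equivalence through matrices of the same size `n`: a finite chain of
elementary strong shift equivalences, all between `n × n` matrices. -/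
def SSEn (S : Set ℝ) {n : ℕ} (A B : Matrix (Fin n) (Fin n) ℝ) : Prop :=
  Relation.ReflTransGen (ESSEn S) A B

/-- `A` and `B` are similar via a conjugating matrix invertible over `U ⊆ ℝ`. -/
def SimilarOver (U : Set ℝ) {n : ℕ} (A B : Matrix (Fin n) (Fin n) ℝ) : Prop :=
  ∃ M : Matrix (Fin n) (Fin n) ℝ, IsUnit M ∧ (∀ i j, M i j ∈ U) ∧
    (∀ i j, M⁻¹ i j ∈ U) ∧ B = M * A * M⁻¹

namespace Matrix

section RankOneUpdate

variable {ι K : Type*} [Fintype ι] [CommRing K] {A : Matrix ι ι K}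

def rankOneConj (A : Matrix ι ι K) (x : ι → K) : Matrix ι ι K :=
  A + replicateRow ι (x ᵥ* A - x)

theorem mul_replicateRow_of_mulVec_one (hA : A *ᵥ 1 = 1) (x : ι → K) :
    A * replicateRow ι x = replicateRow ι x := by
  rw [← one_vecMulVec, mul_vecMulVec, hA]

theorem vecMul_replicateRow (x y : ι → K) : x ᵥ* replicateRow ι y = (∑ i, x i) • y := by
  rw [← one_vecMulVec, vecMul_vecMulVec, dotProduct_one]

theorem replicateRow_mul_replicateRow (x y : ι → K) :
    replicateRow ι x * replicateRow ι y = (∑ i, x i) • replicateRow ι y := by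
  rw [← replicateRow_vecMul, vecMul_replicateRow, replicateRow_smul]

theorem sum_vecMul_of_mulVec_one (hA : A *ᵥ 1 = 1) (x : ι → K) :
    ∑ j, (x ᵥ* A) j = ∑ j, x j := by
  rw [← dotProduct_one, ← dotProduct_one, ← dotProduct_mulVec, hA]

theorem rankOneConj_mulVec_one (hA : A *ᵥ 1 = 1) (x : ι → K) : rankOneConj A x *ᵥ 1 = 1 := by
  have hsum : ∑ j, (x ᵥ* A - x) j = 0 := by
    simp [Finset.sum_sub_distrib, sum_vecMul_of_mulVec_one hA]
  rw [rankOneConj, add_mulVec, hA, replicateRow_mulVec_eq_const, dotProduct_one, hsum]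
  ext; simp

theorem rankOneConj_sub_smul_one_apply {π : ι → K} (hπ : π ᵥ* A = π) (c : K) (i j : ι) :
    rankOneConj A (π - c • 1) i j = A i j + c * (1 - ∑ k, A k j) := by
  rw [rankOneConj, sub_vecMul, smul_vecMul, hπ]
  simp [vecMul, dotProduct]
  ring

variable [DecidableEq ι]

theorem one_add_replicateRow_mul_one_sub {x : ι → K} (hx : ∑ j, x j = 0) :
    (1 + replicateRow ι x) * (1 - replicateRow ι x) = 1 := by
  rw [add_mul, mul_sub, mul_sub, replicateRow_mul_replicateRow, hx]
  simp

theorem one_add_replicateRow_mul_mul_one_sub (hA : A *ᵥ 1 = 1) {x : ι → K}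
    (hx : ∑ j, x j = 0) :
    (1 + replicateRow ι x) * A * (1 - replicateRow ι x) = rankOneConj A x := by
  rw [add_mul, one_mul, ← replicateRow_vecMul, add_mul, mul_sub, mul_sub, mul_one, mul_one,
    mul_replicateRow_of_mulVec_one hA, replicateRow_mul_replicateRow,
    sum_vecMul_of_mulVec_one hA, hx, zero_smul, sub_zero, rankOneConj]
  ext; simp; ring

theorem sub_replicateRow_mul_one_add (hA : A *ᵥ 1 = 1) {a : ι → K} {t : K}
    (ht : t * (1 - ∑ j, a j) = 1) :
    (A - replicateRow ι a) * (1 + t • replicateRow ι a) = A := by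
  rw [sub_mul, mul_add, mul_add, mul_one, mul_one, mul_smul_comm, mul_smul_comm,
    mul_replicateRow_of_mulVec_one hA, replicateRow_mul_replicateRow, smul_smul]
  ext i j
  simp
  linear_combination a j * ht

theorem one_add_mul_sub_replicateRow {a : ι → K} {t : K} (ht : t * (1 - ∑ j, a j) = 1) :
    (1 + t • replicateRow ι a) * (A - replicateRow ι a) =
      A + t • replicateRow ι (a ᵥ* A - a) := by
  rw [add_mul, mul_sub, mul_sub, one_mul, smul_mul_assoc, smul_mul_assoc, ← replicateRow_vecMul,
    replicateRow_mul_replicateRow, smul_smul]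
  ext i j
  simp
  linear_combination a j * ht

theorem one_add_mul_sub_replicateRow_eq_rankOneConj {a b : ι → K} {t : K}
    (hab : ∑ j, a j = ∑ j, b j) (ht : t * (1 - ∑ j, a j) = 1) :
    (1 + t • replicateRow ι a) * (A - replicateRow ι a) =
      (1 + t • replicateRow ι b) * (rankOneConj A (a - b) - replicateRow ι b) := by
  rw [one_add_mul_sub_replicateRow ht, one_add_mul_sub_replicateRow (hab ▸ ht), rankOneConj,
    vecMul_add, vecMul_replicateRow, ← hab, sub_vecMul]
  ext i j
  simp
  linear_combination ((a ᵥ* A) j - (b ᵥ* A) j - (a j - b j)) * ht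

end RankOneUpdate

section Stationary

variable {ι K : Type*} [Fintype ι] [Field K] {A : Matrix ι ι K}

theorem exists_ne_zero_vecMul_eq_self [DecidableEq ι] [Nonempty ι] (hA : A *ᵥ 1 = 1) :
    ∃ v ≠ 0, v ᵥ* A = v := by
  have hdet : (A - 1).det = 0 :=
    exists_mulVec_eq_zero_iff.mp ⟨1, one_ne_zero, by rw [sub_mulVec, hA, one_mulVec, sub_self]⟩
  obtain ⟨v, hv, hvA⟩ := exists_vecMul_eq_zero_iff.mpr hdet
  exact ⟨v, hv, by rwa [vecMul_sub, vecMul_one, sub_eq_zero] at hvA⟩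

variable [LinearOrder K] [IsStrictOrderedRing K]

theorem pos_of_vecMul_eq_self (hpos : ∀ i j, 0 < A i j) (hA : A *ᵥ 1 = 1) {v : ι → K}
    (hv : v ᵥ* A = v) {k : ι} (hk : 0 < v k) (j : ι) : 0 < v j := by
  -- `v⁺ ≤ v⁺ A` entrywise with equal sums forces `v⁺ A = v⁺`, and `v⁺ A > 0` since `v⁺ k > 0`.
  have hle : ∀ j, v⁺ j ≤ (v⁺ ᵥ* A) j := fun j => by
    have hvA : (v ᵥ* A) j ≤ (v⁺ ᵥ* A) j :=
      Finset.sum_le_sum fun i _ => mul_le_mul_of_nonneg_right (le_posPart (v i)) (hpos i j).le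
    have h0 : 0 ≤ (v⁺ ᵥ* A) j :=
      Finset.sum_nonneg fun i _ => mul_nonneg (posPart_nonneg (v i)) (hpos i j).le
    rw [hv] at hvA
    exact sup_le hvA h0
  have hfix : v⁺ ᵥ* A = v⁺ := funext fun j =>
    (((Finset.sum_eq_sum_iff_of_le fun j _ => hle j).mp
      (sum_vecMul_of_mulVec_one hA _).symm) j (Finset.mem_univ j)).symm
  have : 0 < v⁺ j := by
    rw [← hfix]
    exact Finset.sum_pos' (fun i _ => mul_nonneg (posPart_nonneg (v i)) (hpos i j).le)
      ⟨k, Finset.mem_univ k, mul_pos (posPart_pos hk) (hpos k j)⟩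
  simpa using this

theorem exists_stationary_distribution [DecidableEq ι] [Nonempty ι] (hpos : ∀ i j, 0 < A i j)
    (hA : A *ᵥ 1 = 1) :
    ∃ π : ι → K, (∀ j, 0 < π j) ∧ ∑ j, π j = 1 ∧ π ᵥ* A = π := by
  obtain ⟨v, hv0, hv⟩ := exists_ne_zero_vecMul_eq_self hA
  obtain ⟨k, hk⟩ := Function.ne_iff.mp hv0
  set w := (v k)⁻¹ • v
  have hw : w ᵥ* A = w := by rw [smul_vecMul, hv]
  have hwpos : ∀ j, 0 < w j :=
    pos_of_vecMul_eq_self hpos hA hw (k := k) (by simp [w, inv_mul_cancel₀ hk])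
  have hsum : 0 < ∑ j, w j := Finset.sum_pos (fun j _ => hwpos j) Finset.univ_nonempty
  refine ⟨(∑ j, w j)⁻¹ • w, fun j => ?_, ?_, by rw [smul_vecMul, hw]⟩
  · simpa using mul_pos (inv_pos.mpr hsum) (hwpos j)
  · simp [← Finset.mul_sum, inv_mul_cancel₀ hsum.ne']

end Stationary

end Matrix

namespace Subfield

variable (𝕌 : Subfield ℝ)

theorem exists_stationary_distribution_mem {ι : Type*} [Fintype ι] [DecidableEq ι] [Nonempty ι]
    {P : Matrix ι ι ℝ} (hP𝕌 : ∀ i j, P i j ∈ 𝕌) (hpos : ∀ i j, 0 < P i j) (hP : P *ᵥ 1 = 1) :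
    ∃ π : ι → ℝ, (∀ j, π j ∈ 𝕌) ∧ (∀ j, 0 < π j) ∧ ∑ j, π j = 1 ∧ π ᵥ* P = π := by
  set P' : Matrix ι ι 𝕌 := of fun i j => ⟨P i j, hP𝕌 i j⟩
  have hP' : P' *ᵥ 1 = 1 := funext fun i => Subtype.ext <| by
    simpa [P', mulVec, dotProduct] using congrFun hP i
  obtain ⟨π, hπpos, hπsum, hπ⟩ :=
    exists_stationary_distribution (A := P') (fun i j => hpos i j) hP'
  refine ⟨fun j => π j, fun j => (π j).2, hπpos, by simpa using congrArg Subtype.val hπsum,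
    funext fun j => ?_⟩
  simpa [P', vecMul, dotProduct] using congrArg Subtype.val (congrFun hπ j)

theorem posPart_mem {r : ℝ} (hr : r ∈ 𝕌) : r⁺ ∈ 𝕌 := by
  rcases le_total r 0 with h | h
  · rw [posPart_eq_zero.2 h]; exact zero_mem 𝕌
  · rwa [posPart_eq_self.2 h]

theorem negPart_mem {r : ℝ} (hr : r ∈ 𝕌) : r⁻ ∈ 𝕌 := by
  rw [← posPart_neg]; exact 𝕌.posPart_mem (neg_mem hr)

theorem one_apply_mem {ι : Type*} [DecidableEq ι] (i j : ι) : (1 : Matrix ι ι ℝ) i j ∈ 𝕌 := by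
  rw [one_apply]; split_ifs
  exacts [one_mem 𝕌, zero_mem 𝕌]

theorem vecMul_mem {ι : Type*} [Fintype ι] {v : ι → ℝ} {A : Matrix ι ι ℝ} (hv : ∀ i, v i ∈ 𝕌)
    (hA : ∀ i j, A i j ∈ 𝕌) (j : ι) : (v ᵥ* A) j ∈ 𝕌 :=
  sum_mem fun i _ => mul_mem (hv i) (hA i j)

theorem rankOneConj_mem {ι : Type*} [Fintype ι] {A : Matrix ι ι ℝ} {x : ι → ℝ}
    (hA : ∀ i j, A i j ∈ 𝕌) (hx : ∀ j, x j ∈ 𝕌) (i j : ι) : rankOneConj A x i j ∈ 𝕌 :=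
  add_mem (hA i j) (sub_mem (𝕌.vecMul_mem hx hA j) (hx j))

theorem sub_replicateRow_mem_nonneg {ι : Type*} {A : Matrix ι ι ℝ} {a : ι → ℝ}
    (hA : ∀ i j, A i j ∈ 𝕌) (ha : ∀ j, a j ∈ 𝕌) (haA : ∀ i j, a j ≤ A i j) (i j : ι) :
    (A - replicateRow ι a) i j ∈ {x : ℝ | x ∈ 𝕌 ∧ 0 ≤ x} :=
  ⟨sub_mem (hA i j) (ha j), sub_nonneg.2 (haA i j)⟩

theorem one_add_smul_replicateRow_mem_nonneg {ι : Type*} [DecidableEq ι] {t : ℝ} {a : ι → ℝ}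
    (ht𝕌 : t ∈ 𝕌) (ht : 0 ≤ t) (ha𝕌 : ∀ j, a j ∈ 𝕌) (ha : 0 ≤ a) (i j : ι) :
    (1 + t • replicateRow ι a) i j ∈ {x : ℝ | x ∈ 𝕌 ∧ 0 ≤ x} := by
  rw [Matrix.add_apply, Matrix.smul_apply, replicateRow_apply, smul_eq_mul]
  refine ⟨add_mem (𝕌.one_apply_mem i j) (mul_mem ht𝕌 (ha𝕌 j)),
    add_nonneg ?_ (mul_nonneg ht (ha j))⟩
  rw [one_apply]; split_ifs <;> norm_num

end Subfield

theorem similarOver_rankOneConj (𝕌 : Subfield ℝ) {n : ℕ} {P : Matrix (Fin n) (Fin n) ℝ}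
    {x : Fin n → ℝ} (hP : P *ᵥ 1 = 1) (hx𝕌 : ∀ j, x j ∈ 𝕌) (hx : ∑ j, x j = 0) :
    SimilarOver 𝕌 P (rankOneConj P x) := by
  have hMM' := one_add_replicateRow_mul_one_sub hx
  have hinv : (1 + replicateRow (Fin n) x)⁻¹ = 1 - replicateRow (Fin n) x := inv_eq_right_inv hMM'
  refine ⟨1 + replicateRow (Fin n) x,
    (isUnit_iff_isUnit_det _).2 (isUnit_det_of_right_inverse hMM'), fun i j => add_mem (𝕌.one_apply_mem i j) (hx𝕌 j), fun i j => ?_, ?_⟩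
  · rw [hinv]; exact sub_mem (𝕌.one_apply_mem i j) (hx𝕌 j)
  · rw [hinv, one_add_replicateRow_mul_mul_one_sub hP hx]

theorem ssen_rankOneConj (𝕌 : Subfield ℝ) {n : ℕ} {P : Matrix (Fin n) (Fin n) ℝ}
    {a b : Fin n → ℝ} (hP𝕌 : ∀ i j, P i j ∈ 𝕌) (hP : P *ᵥ 1 = 1) (ha𝕌 : ∀ j, a j ∈ 𝕌)
    (hb𝕌 : ∀ j, b j ∈ 𝕌) (ha : 0 ≤ a) (hb : 0 ≤ b) (hab : ∑ j, a j = ∑ j, b j)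
    (hs : ∑ j, a j < 1) (haP : ∀ i j, a j ≤ P i j)
    (hbQ : ∀ i j, b j ≤ rankOneConj P (a - b) i j) :
    SSEn {x | x ∈ 𝕌 ∧ 0 ≤ x} P (rankOneConj P (a - b)) := by
  set t := (1 - ∑ j, a j)⁻¹
  have ht : t * (1 - ∑ j, a j) = 1 := inv_mul_cancel₀ (by linarith)
  have ht𝕌 : t ∈ 𝕌 := inv_mem (sub_mem (one_mem 𝕌) (sum_mem fun j _ => ha𝕌 j))
  have ht0 : 0 ≤ t := inv_nonneg.2 (by linarith)
  have hQ𝕌 := 𝕌.rankOneConj_mem hP𝕌 fun j => sub_mem (ha𝕌 j) (hb𝕌 j)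
  exact .head ⟨_, _, 𝕌.sub_replicateRow_mem_nonneg hP𝕌 ha𝕌 haP,
      𝕌.one_add_smul_replicateRow_mem_nonneg ht𝕌 ht0 ha𝕌 ha, (sub_replicateRow_mul_one_add hP ht).symm,
      rfl⟩
    (.single ⟨_, _, 𝕌.one_add_smul_replicateRow_mem_nonneg ht𝕌 ht0 hb𝕌 hb,
      𝕌.sub_replicateRow_mem_nonneg hQ𝕌 hb𝕌 hbQ, one_add_mul_sub_replicateRow_eq_rankOneConj hab ht,
      (sub_replicateRow_mul_one_add (rankOneConj_mulVec_one hP _) (hab ▸ ht)).symm⟩)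

section Bounds

open Set

theorem sum_posPart_eq_sum_negPart {ι : Type*} [Fintype ι] {x : ι → ℝ} (hx : ∑ j, x j = 0) :
    ∑ j, x⁺ j = ∑ j, x⁻ j := by
  rw [← sub_eq_zero, ← Finset.sum_sub_distrib, ← hx]
  exact Finset.sum_congr rfl fun j _ => congrFun (posPart_sub_negPart x) j

theorem le_add_one_sub_card_mul_of_sum_eq_one {ι : Type*} [Fintype ι] {r : ι → ℝ}
    (hr : ∑ k, r k = 1) {m : ℝ} (hm : ∀ k, m ≤ r k) (j : ι) :
    r j ≤ m + (1 - Fintype.card ι * m) := by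
  have hsum : ∑ k, (r k - m) = 1 - Fintype.card ι * m := by
    simp [Finset.sum_sub_distrib, hr]
  have := Finset.single_le_sum (f := fun k => r k - m) (fun k _ => sub_nonneg.2 (hm k))
    (Finset.mem_univ j)
  simp only [hsum] at this
  linarith

theorem vecMul_mem_Icc {ι : Type*} [Fintype ι] {w : ι → ℝ} {A : Matrix ι ι ℝ} {lo hi : ℝ}
    (hw : ∀ i, 0 ≤ w i) (hw1 : ∑ i, w i = 1) (hA : ∀ i j, A i j ∈ Icc lo hi) (j : ι) :
    (w ᵥ* A) j ∈ Icc lo hi :=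
  (convex_Icc lo hi).sum_mem (fun i _ => hw i) hw1 fun i _ => hA i j

variable {n : ℕ} {P : Matrix (Fin n) (Fin n) ℝ} {L : ℝ}

theorem sum_sub_one_div_smul_one {π : Fin n → ℝ} (hπ1 : ∑ j, π j = 1) :
    ∑ j, (π - (1 / n : ℝ) • 1) j = 0 := by
  have hn : (n : ℝ) ≠ 0 := by
    rintro h
    obtain rfl : n = 0 := by exact_mod_cast h
    simp at hπ1
  simp [Finset.sum_sub_distrib, hπ1, hn]

theorem Subfield.sub_one_div_smul_one_mem (𝕌 : Subfield ℝ) {π : Fin n → ℝ}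
    (hπ : ∀ j, π j ∈ 𝕌) (j : Fin n) : (π - (1 / n : ℝ) • 1) j ∈ 𝕌 :=
  sub_mem (hπ j) (by simp [inv_mem (natCast_mem 𝕌 n)])

theorem sum_rankOneConj_sub_one_div_smul_one {π : Fin n → ℝ} (hπ : π ᵥ* P = π) (j : Fin n) :
    ∑ i, rankOneConj P (π - (1 / n : ℝ) • 1) i j = 1 := by
  have hn : (n : ℝ) ≠ 0 := by have := j.pos; positivity
  simp only [rankOneConj_sub_smul_one_apply hπ, Finset.sum_add_distrib, Finset.sum_const,
    Finset.card_univ, Fintype.card_fin, nsmul_eq_mul]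
  field_simp
  ring

theorem add_one_sub_sum_div_pos (hPL : ∀ i j, L < P i j) (hPU : ∀ i j, P i j ≤ L + 1 / n)
    (i j : Fin n) : 0 < P i j + 1 / n * (1 - ∑ k, P k j) := by
  have hn : (0 : ℝ) < n := by exact_mod_cast i.pos
  have hcol : ∑ k, P k j ≤ n * L + 1 := by
    calc ∑ k, P k j ≤ ∑ _k : Fin n, (L + 1 / n) := Finset.sum_le_sum fun k _ => hPU k j
      _ = n * L + 1 := by simp; field_simp
  have : -L ≤ 1 / n * (1 - ∑ k, P k j) := by
    rw [one_div_mul_eq_div, le_div_iff₀ hn]; linarith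
  linarith [hPL i j]

theorem sum_div_sub_le_of_vecMul_eq_self {π : Fin n → ℝ} (hπ : π ᵥ* P = π)
    (hπ1 : ∑ k, π k = 1) (hπL : ∀ k, L ≤ π k) (hPL : ∀ i j, L ≤ P i j)
    (hPU : ∀ i j, P i j ≤ L + 1 / n) (hLn : L ≤ 1 / n) (j : Fin n) :
    (∑ k, P k j) / n - π j ≤ 1 / n - L := by
  have hn : (n : ℝ) ≠ 0 := by have := j.pos; positivity
  have hdecomp : (∑ k, P k j) / n - π j = ∑ k, (1 / n - π k) * (P k j - L) := by
    have hπj : π j = ∑ k, π k * P k j := (congrFun hπ j).symm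
    simp only [sub_mul, mul_sub, Finset.sum_sub_distrib, ← Finset.sum_mul, ← Finset.mul_sum, hπ1,
      ← hπj, Finset.sum_const, Finset.card_univ, Fintype.card_fin, nsmul_eq_mul]
    field_simp
    ring
  calc (∑ k, P k j) / n - π j = ∑ k, (1 / n - π k) * (P k j - L) := hdecomp
    _ ≤ ∑ _k : Fin n, (1 / n - L) * (1 / n) := Finset.sum_le_sum fun k _ =>
        mul_le_mul (by linarith [hπL k]) (by linarith [hPU k j]) (by linarith [hPL k j])
          (by linarith)
    _ = 1 / n - L := by
        simp only [Finset.sum_const, Finset.card_univ, Fintype.card_fin, nsmul_eq_mul]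
        field_simp

theorem ssen_rankOneConj_stationary (𝕌 : Subfield ℝ) (hn : 2 ≤ n) (hL : L = 1 / n - 1 / n ^ 2)
    {π : Fin n → ℝ} (hP𝕌 : ∀ i j, P i j ∈ 𝕌) (hP : P *ᵥ 1 = 1) (hπ𝕌 : ∀ j, π j ∈ 𝕌)
    (hπP : π ᵥ* P = π) (hπ1 : ∑ j, π j = 1) (hPL : ∀ i j, L < P i j)
    (hPU : ∀ i j, P i j ≤ L + 1 / n) (hπL : ∀ j, π j ∈ Icc L (L + 1 / n)) :
    SSEn {x | x ∈ 𝕌 ∧ 0 ≤ x} P (rankOneConj P (π - (1 / n : ℝ) • 1)) := by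
  have hn0 : (0 : ℝ) < n := by positivity
  have hL0 : 1 / (n : ℝ) ^ 2 ≤ L := by
    have : (2 : ℝ) ≤ n := by exact_mod_cast hn
    rw [hL, le_sub_iff_add_le, ← add_div, div_le_div_iff₀ (by positivity) hn0]
    nlinarith
  have hx𝕌 := 𝕌.sub_one_div_smul_one_mem hπ𝕌
  set x := π - (1 / n : ℝ) • 1
  have hx : ∀ j, x j = π j - 1 / n := fun j => by simp [x]
  have hxL : ∀ j, x⁺ j ≤ L := fun j =>
    sup_le (by linarith [hx j, (hπL j).2]) (le_trans (by positivity) hL0)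
  rw [← posPart_sub_negPart x]
  refine ssen_rankOneConj 𝕌 hP𝕌 hP (fun j => 𝕌.posPart_mem (hx𝕌 j))
    (fun j => 𝕌.negPart_mem (hx𝕌 j)) (posPart_nonneg x) (negPart_nonneg x)
    (sum_posPart_eq_sum_negPart (sum_sub_one_div_smul_one hπ1)) ?_
    (fun i j => (hxL j).trans (hPL i j).le) fun i j => ?_
  · calc ∑ j, x⁺ j ≤ ∑ _j : Fin n, L := Finset.sum_le_sum fun j _ => hxL j
      _ = 1 - 1 / n := by simp [hL]; field_simp
      _ < 1 := by linarith [one_div_pos.2 hn0]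
  · rw [posPart_sub_negPart, rankOneConj_sub_smul_one_apply hπP]
    refine sup_le ?_ (add_one_sub_sum_div_pos hPL hPU i j).le
    have hcol := sum_div_sub_le_of_vecMul_eq_self hπP hπ1 (fun k => (hπL k).1)
      (fun i j => (hPL i j).le) hPU (by linarith [one_div_nonneg.2 (sq_nonneg (n : ℝ))]) j
    rw [Pi.neg_apply, hx, mul_sub, mul_one, one_div_mul_eq_div]
    linarith [hPL i j]

end Bounds

/-- Let `𝕌` be a subfield of `ℝ`, `n ≥ 2`, and `P` an `n × n` positive
stochastic matrix over `𝕌`. If every entry of `P` is greater than `1/n - 1/n²`, then `P` is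
similar over `𝕌` to a positive doubly stochastic matrix `Q` and strong shift equivalent over
`𝕌₊` to `Q` through `n × n` matrices. -/
theorem stmt7 (𝕌 : Subfield ℝ) {n : ℕ} (hn : 2 ≤ n)
    (P : Matrix (Fin n) (Fin n) ℝ) (hUP : ∀ i j, P i j ∈ 𝕌)
    (hpos : ∀ i j, 0 < P i j) (hrow : ∀ i, ∑ j, P i j = 1)
    (hmin : ∀ i j, 1 / (n : ℝ) - 1 / (n : ℝ) ^ 2 < P i j) :
    ∃ Q : Matrix (Fin n) (Fin n) ℝ,
      (∀ i j, Q i j ∈ 𝕌) ∧ (∀ i j, 0 < Q i j) ∧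
      (∀ i, ∑ j, Q i j = 1) ∧ (∀ j, ∑ i, Q i j = 1) ∧
      SimilarOver (𝕌 : Set ℝ) P Q ∧
      SSEn {x : ℝ | x ∈ 𝕌 ∧ 0 ≤ x} P Q := by
  have : Nonempty (Fin n) := ⟨⟨0, by omega⟩⟩
  have hP : P *ᵥ 1 = 1 := funext fun i => by simpa [mulVec, dotProduct] using hrow i
  obtain ⟨π, hπ𝕌, hπpos, hπ1, hπP⟩ := 𝕌.exists_stationary_distribution_mem hUP hpos hP
  set L := 1 / (n : ℝ) - 1 / (n : ℝ) ^ 2 with hL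
  have hPU : ∀ i j, P i j ≤ L + 1 / n := fun i j => by
    convert le_add_one_sub_card_mul_of_sum_eq_one (hrow i) (fun k => (hmin i k).le) j using 2
    simp [hL]; field_simp; ring
  have hπL : ∀ j, π j ∈ Set.Icc L (L + 1 / n) := fun j =>
    hπP ▸ vecMul_mem_Icc (fun i => (hπpos i).le) hπ1 (fun i j => ⟨(hmin i j).le, hPU i j⟩) j
  have hx𝕌 := 𝕌.sub_one_div_smul_one_mem hπ𝕌
  refine ⟨rankOneConj P (π - (1 / n : ℝ) • 1), 𝕌.rankOneConj_mem hUP hx𝕌, fun i j => ?_,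
    fun i => ?_, sum_rankOneConj_sub_one_div_smul_one hπP,
    similarOver_rankOneConj 𝕌 hP hx𝕌 (sum_sub_one_div_smul_one hπ1),
    ssen_rankOneConj_stationary 𝕌 hn hL hUP hP hπ𝕌 hπP hπ1 hmin hPU hπL⟩
  · rw [rankOneConj_sub_smul_one_apply hπP]
    exact add_one_sub_sum_div_pos hmin hPU i j
  · simpa [mulVec, dotProduct] using congrFun (rankOneConj_mulVec_one hP _) i
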